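/- arXiv:1505.07297 — 2 statements merged into one kernel-verified Lean document; each statement's English description precedes it below -/
import Mathlib

section
/- Let k be divisible by 3 and let C = x₁x₂…x_k be a cycle of length k. Let K₁ and K₂ be two cycles of length k in a graph G sharing at least one vertex, with K_i = v_{i,1}v_{i,2}…v_{i,k} labeled so that there is a homomorphism θ from K₁ ∪ K₂ to C with θ(v_{i,j}) = x_j for all i,j. If φ is a proper 3-coloring of K₁ ∪ K₂ such that φ has winding number k/3 on K₁ and on K₂ (with respect to these orientations), then φ(u) = φ(v) for all vertices u ∈ V(K₁), v ∈ V(K₂) with θ(u) = θ(v). -/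
/-!
Since every δ is at most 1, a cycle of length k on which the δ sum to k has δ = 1 on every
edge, i.e. the colour goes up by one (mod 3) along each edge. Hence along Kᵢ the colour of
`vᵢ j` is `φ (vᵢ 0) + j` mod 3. A shared vertex has the same index on both cycles (θ reads
it off), which forces `φ (v₁ 0) ≡ φ (v₂ 0)`, so vertices with equal θ get colours congruent
mod 3, and colours in {1, 2, 3} congruent mod 3 are equal.
-/

/-- δ_ψ(u,v) = 1 if ψ(v)−ψ(u) ∈ {1,−2}, and −1 otherwise. -/
def delta {V : Type*} (ψ : V → ℤ) (u v : V) : ℤ :=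
  if ψ v - ψ u = 1 ∨ ψ v - ψ u = -2 then 1 else -1

lemma delta_le_one {V : Type*} (ψ : V → ℤ) (u v : V) : delta ψ u v ≤ 1 := by
  unfold delta; split <;> omega

lemma intCast_eq_add_one_of_delta_eq_one {V : Type*} {ψ : V → ℤ} {u v : V}
    (h : delta ψ u v = 1) : (ψ v : ZMod 3) = ψ u + 1 := by
  unfold delta at h
  split at h
  case isFalse => omega
  case isTrue hstep =>
    rw [← Int.cast_one, ← Int.cast_add, ZMod.intCast_eq_intCast_iff_dvd_sub]
    omega

lemma eq_of_intCast_eq_of_mem {a b : ℤ} (ha : a ∈ ({1, 2, 3} : Set ℤ))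
    (hb : b ∈ ({1, 2, 3} : Set ℤ)) (h : (a : ZMod 3) = b) : a = b := by
  rw [ZMod.intCast_eq_intCast_iff_dvd_sub] at h
  simp only [Set.mem_insert_iff, Set.mem_singleton_iff] at ha hb
  omega

lemma intCast_apply_natCast_of_delta_eq_one {V : Type*} {k : ℕ} (φ : V → ℤ) (v : ZMod k → V)
    (hstep : ∀ j, delta φ (v j) (v (j + 1)) = 1)
    (n : ℕ) : (φ (v n) : ZMod 3) = φ (v 0) + n := by
  induction n with
  | zero => simp
  | succ n ih =>
    rw [Nat.cast_succ, intCast_eq_add_one_of_delta_eq_one (hstep n), ih, Nat.cast_succ,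
      add_assoc]

section Cycle

variable {V : Type*} {k : ℕ} [NeZero k] (φ : V → ℤ) (v : ZMod k → V)

lemma delta_eq_one_of_sum_delta_eq
    (hwind : ∑ j : ZMod k, delta φ (v j) (v (j + 1)) = k) (j : ZMod k) :
    delta φ (v j) (v (j + 1)) = 1 := by
  have hsum : ∑ j : ZMod k, delta φ (v j) (v (j + 1)) = ∑ _j : ZMod k, (1 : ℤ) := by
    simp [hwind, ZMod.card]
  exact (Finset.sum_eq_sum_iff_of_le fun j _ ↦ delta_le_one φ _ _).1 hsum j
    (Finset.mem_univ j)

lemma intCast_apply_of_sum_delta_eq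
    (hwind : ∑ j : ZMod k, delta φ (v j) (v (j + 1)) = k) (a : ZMod k) :
    (φ (v a) : ZMod 3) = φ (v 0) + a.val := by
  simpa only [ZMod.natCast_zmod_val] using
    intCast_apply_natCast_of_delta_eq_one φ v (delta_eq_one_of_sum_delta_eq φ v hwind) a.val

end Cycle

theorem stmt6_general {V : Type*} (k : ℕ) [NeZero k]
    (v₁ v₂ : ZMod k → V)
    (θ : V → ZMod k)
    (hθ₁ : ∀ j, θ (v₁ j) = j) (hθ₂ : ∀ j, θ (v₂ j) = j)
    (hshare : ∃ a b, v₁ a = v₂ b)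
    (φ : V → ℤ)
    (hcol : ∀ v, φ v ∈ ({1, 2, 3} : Set ℤ))
    (hwind₁ : (∑ j : ZMod k, delta φ (v₁ j) (v₁ (j + 1))) = (k : ℤ))
    (hwind₂ : (∑ j : ZMod k, delta φ (v₂ j) (v₂ (j + 1))) = (k : ℤ)) :
    ∀ a b : ZMod k, θ (v₁ a) = θ (v₂ b) → φ (v₁ a) = φ (v₂ b) := by
  have hcolor₁ := intCast_apply_of_sum_delta_eq φ v₁ hwind₁
  have hcolor₂ := intCast_apply_of_sum_delta_eq φ v₂ hwind₂
  obtain ⟨c, d, hcd⟩ := hshare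
  obtain rfl : c = d := by simpa only [hθ₁, hθ₂] using congrArg θ hcd
  have hbase : (φ (v₁ 0) : ZMod 3) = φ (v₂ 0) := by
    have h := hcolor₁ c
    rwa [hcd, hcolor₂, add_left_inj, eq_comm] at h
  intro a b hab
  obtain rfl : a = b := by rwa [hθ₁, hθ₂] at hab
  exact eq_of_intCast_eq_of_mem (hcol _) (hcol _) (by rw [hcolor₁, hcolor₂, hbase])

/-- Let 3 ∣ k, and let K₁, K₂ (vertices `v₁ j`, `v₂ j` for `j : ZMod k`, representing
v_{i,j}) be k-cycles in G sharing at least one vertex, labeled so that the map θ with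
θ(v_{i,j}) = x_j (i.e. θ(vᵢ j) = j) is a homomorphism from K₁ ∪ K₂ to the k-cycle C.
If φ is a proper 3-coloring (of a graph containing K₁ ∪ K₂) with winding number k/3 on
both K₁ and K₂ (i.e. δ_φ(Kᵢ) = k), then φ(u) = φ(v) whenever u ∈ V(K₁), v ∈ V(K₂) and
θ(u) = θ(v). -/
theorem stmt6 {V : Type*} (G : SimpleGraph V) (k : ℕ) [NeZero k] (hk3 : 3 ∣ k)
    (v₁ v₂ : ZMod k → V)
    (hinj₁ : Function.Injective v₁) (hinj₂ : Function.Injective v₂)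
    (hadj₁ : ∀ j : ZMod k, G.Adj (v₁ j) (v₁ (j + 1)))
    (hadj₂ : ∀ j : ZMod k, G.Adj (v₂ j) (v₂ (j + 1)))
    (θ : V → ZMod k)
    (hθ₁ : ∀ j, θ (v₁ j) = j) (hθ₂ : ∀ j, θ (v₂ j) = j)
    (hshare : ∃ a b, v₁ a = v₂ b)
    (φ : V → ℤ)
    (hcol : ∀ v, φ v ∈ ({1, 2, 3} : Set ℤ))
    (hprop : ∀ u v, G.Adj u v → φ u ≠ φ v)
    (hwind₁ : (∑ j : ZMod k, delta φ (v₁ j) (v₁ (j + 1))) = (k : ℤ))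
    (hwind₂ : (∑ j : ZMod k, delta φ (v₂ j) (v₂ (j + 1))) = (k : ℤ)) :
    ∀ a b : ZMod k, θ (v₁ a) = θ (v₂ b) → φ (v₁ a) = φ (v₂ b) :=
  stmt6_general k v₁ v₂ θ hθ₁ hθ₂ hshare φ hcol hwind₁ hwind₂
end

section
/- Let C be a cycle of length k and ψ, ψ′ two proper 3-colorings of C with the same winding number w, where k is divisible by 3 and |w| = k/3. Then ψ′ is obtained from ψ by adding a constant modulo 3: there exists α ∈ {0,1,2} such that ψ′(v) ≡ ψ(v) + α (mod 3) for all vertices v (colors identified with Z/3). In particular, if ψ and ψ′ agree on a single vertex, then ψ = ψ′. -/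
/-!
Each term of the winding sum is `±1`, so a sum of `±k` over the `k` edges forces every term to be
`+1` (resp. every term to be `-1`). Hence both colorings advance by the same constant step along
the cycle, their difference is invariant under `i ↦ i + 1`, and so it is constant.
-/

/-- With colors identified with ℤ/3: δ_ψ(u,v) = 1 if ψ(v)−ψ(u) ≡ 1 (mod 3),
and −1 otherwise (for proper colorings, the nonzero difference is ±1 mod 3). -/
def deltaZ3 {V : Type*} (ψ : V → ZMod 3) (u v : V) : ℤ :=
  if ψ v - ψ u = 1 then 1 else -1

theorem Fintype.eq_one_of_sum_eq_card {α : Type*} [Fintype α] {f : α → ℤ} (hf : ∀ a, f a ≤ 1)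
    (h : ∑ a, f a = Fintype.card α) (a : α) : f a = 1 :=
  (Finset.sum_eq_sum_iff_of_le fun a _ => hf a).1 (by simpa using h) a (Finset.mem_univ a)

theorem ZMod.eq_apply_zero_of_periodic_one {k : ℕ} {β : Type*} {f : ZMod k → β}
    (hf : Function.Periodic f 1) (i : ZMod k) : f i = f 0 := by
  obtain ⟨n, rfl⟩ := ZMod.intCast_surjective i
  simpa using hf.int_mul_eq n

section deltaZ3

variable {V : Type*} (ψ : V → ZMod 3) (u v : V)

theorem deltaZ3_le_one : deltaZ3 ψ u v ≤ 1 := by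
  unfold deltaZ3; split <;> norm_num

theorem neg_one_le_deltaZ3 : -1 ≤ deltaZ3 ψ u v := by
  unfold deltaZ3; split <;> norm_num

theorem deltaZ3_eq_one_iff : deltaZ3 ψ u v = 1 ↔ ψ v = ψ u + 1 := by
  rw [← sub_eq_iff_eq_add']
  unfold deltaZ3; split <;> simp_all

theorem deltaZ3_eq_neg_one_iff (h : ψ u ≠ ψ v) : deltaZ3 ψ u v = -1 ↔ ψ v = ψ u - 1 := by
  unfold deltaZ3
  revert h; generalize ψ u = a; generalize ψ v = b
  revert a b; decide

end deltaZ3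

section Cycle

variable {k : ℕ} [NeZero k] (φ : ZMod k → ZMod 3)

theorem apply_add_one_of_sum_deltaZ3_eq_card (h : ∑ i, deltaZ3 φ i (i + 1) = k)
    (i : ZMod k) : φ (i + 1) = φ i + 1 :=
  (deltaZ3_eq_one_iff φ _ _).1 <|
    Fintype.eq_one_of_sum_eq_card (f := fun i => deltaZ3 φ i (i + 1))
      (fun _ => deltaZ3_le_one _ _ _) (by rwa [ZMod.card]) i

theorem apply_add_one_of_sum_deltaZ3_eq_neg_card (hφ : ∀ i, φ i ≠ φ (i + 1))
    (h : ∑ i, deltaZ3 φ i (i + 1) = -k) (i : ZMod k) : φ (i + 1) = φ i - 1 := by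
  have hneg : -deltaZ3 φ i (i + 1) = 1 :=
    Fintype.eq_one_of_sum_eq_card (f := fun i => -deltaZ3 φ i (i + 1))
      (fun _ => neg_le.1 (neg_one_le_deltaZ3 _ _ _))
      (by simp [Finset.sum_neg_distrib, h]) i
  exact (deltaZ3_eq_neg_one_iff φ _ _ (hφ i)).1 (by omega)

end Cycle

theorem stmt15_general (k : ℕ) [NeZero k]
    (ψ ψ' : ZMod k → ZMod 3)
    (hprop : ∀ i : ZMod k, ψ i ≠ ψ (i + 1))
    (hprop' : ∀ i : ZMod k, ψ' i ≠ ψ' (i + 1))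
    (w : ℤ)
    (hw : (∑ i : ZMod k, deltaZ3 ψ i (i + 1)) = 3 * w)
    (hw' : (∑ i : ZMod k, deltaZ3 ψ' i (i + 1)) = 3 * w)
    (habs : 3 * w = (k : ℤ) ∨ 3 * w = -(k : ℤ)) :
    (∃ α : ZMod 3, ∀ v : ZMod k, ψ' v = ψ v + α) ∧
      ((∃ v : ZMod k, ψ v = ψ' v) → ψ = ψ') := by
  obtain ⟨c, hψ, hψ'⟩ :
      ∃ c : ZMod 3, (∀ i, ψ (i + 1) = ψ i + c) ∧ ∀ i, ψ' (i + 1) = ψ' i + c := by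
    rcases habs with h | h
    · exact ⟨1, apply_add_one_of_sum_deltaZ3_eq_card ψ (hw.trans h),
        apply_add_one_of_sum_deltaZ3_eq_card ψ' (hw'.trans h)⟩
    · refine ⟨-1, fun i => ?_, fun i => ?_⟩
      · rw [apply_add_one_of_sum_deltaZ3_eq_neg_card ψ hprop (hw.trans h), sub_eq_add_neg]
      · rw [apply_add_one_of_sum_deltaZ3_eq_neg_card ψ' hprop' (hw'.trans h), sub_eq_add_neg]
  have hperiodic : Function.Periodic (fun v => ψ' v - ψ v) 1 := fun i => by
    simp only [hψ, hψ']; ring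
  have hconst := ZMod.eq_apply_zero_of_periodic_one hperiodic
  refine ⟨⟨ψ' 0 - ψ 0, fun v => by linear_combination hconst v⟩, ?_⟩
  rintro ⟨v, hv⟩
  funext u
  linear_combination hconst v - hconst u + hv

/-- Let C be a cycle of length k with 3 ∣ k, and let ψ, ψ′ be proper 3-colorings of C
(colors in ℤ/3) with the same winding number w, where |w| = k/3 (i.e. 3w = ±k).
Then ψ′ = ψ + α for a constant α ∈ ℤ/3; in particular, if ψ and ψ′ agree on a single
vertex then ψ = ψ′. -/
theorem stmt15 (k : ℕ) [NeZero k] (hk3 : 3 ∣ k)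
    (ψ ψ' : ZMod k → ZMod 3)
    (hprop : ∀ i : ZMod k, ψ i ≠ ψ (i + 1))
    (hprop' : ∀ i : ZMod k, ψ' i ≠ ψ' (i + 1))
    (w : ℤ)
    (hw : (∑ i : ZMod k, deltaZ3 ψ i (i + 1)) = 3 * w)
    (hw' : (∑ i : ZMod k, deltaZ3 ψ' i (i + 1)) = 3 * w)
    (habs : 3 * w = (k : ℤ) ∨ 3 * w = -(k : ℤ)) :
    (∃ α : ZMod 3, ∀ v : ZMod k, ψ' v = ψ v + α) ∧
      ((∃ v : ZMod k, ψ v = ψ' v) → ψ = ψ') :=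
  stmt15_general k ψ ψ' hprop hprop' w hw hw' habs
end
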